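/- Let K be an algebraically closed field of characteristic zero, n, r ≥ 1, and let σ be a regular action of T_r = (K^×)^r on F_n = FreeAlgebra K (Fin n) with positive roots: there are integers k_{ij} ≥ 1 (1 ≤ i ≤ n, 1 ≤ j ≤ r) such that for every t and i, the element σ(t)(z_i) − (∏_j t_j^{k_{ij}}) • z_i has all of its homogeneous components in degrees ≥ 2. Then σ is linearizable. -/

import Mathlib

/-!
Expanding `σ t (z i) = ∑ₘ tᵐ • a i m` and using the independence of characters, each `a i m`
is a weight vector of weight `m`, `z i = ∑ₘ a i m`, and the positive-root condition gives
`a i (k i) ≡ z i` modulo degree `≥ 2`. The endomorphism `φ : z i ↦ a i (k i)` is the identity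
modulo higher order terms, hence injective. Every element is a sum of weight vectors, and a
weight vector `y` of weight `m` lies in the range of `φ`: the monomials of lowest degree in `y`
all have weight `m`, so `φ` of that homogeneous part is again of weight `m`, and subtracting it
raises the order of `y`; as the roots are positive, a monomial of weight `m` has length at most
`m j`, so the process ends. Conjugation by `φ` turns `σ t` into `z i ↦ tᵏ⁽ⁱ⁾ • z i`.
-/

open FreeAlgebra

/-- A torus action `σ` of `(Kˣ)^r` on the free algebra is *regular* if the image of each
generator depends on `t` as a Laurent polynomial with coefficients in the free algebra. -/
def TorusActionIsRegular {K : Type} [Field K] {n r : ℕ}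
    (σ : (Fin r → Kˣ) →* (FreeAlgebra K (Fin n) ≃ₐ[K] FreeAlgebra K (Fin n))) : Prop :=
  ∀ i : Fin n, ∃ a : ((Fin r → ℤ) →₀ FreeAlgebra K (Fin n)),
    ∀ t : Fin r → Kˣ,
      σ t (ι K i) = a.sum fun m c => ((∏ j : Fin r, (t j) ^ (m j) : Kˣ) : K) • c

/-- A torus action on the free algebra is *linearizable* if some algebra automorphism `β`
conjugates it into an action mapping each generator into the linear span of the generators. -/
def TorusActionIsLinearizable {K : Type} [Field K] {n r : ℕ}
    (σ : (Fin r → Kˣ) →* (FreeAlgebra K (Fin n) ≃ₐ[K] FreeAlgebra K (Fin n))) : Prop :=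
  ∃ β : FreeAlgebra K (Fin n) ≃ₐ[K] FreeAlgebra K (Fin n),
    ∀ (t : Fin r → Kˣ) (i : Fin n),
      β.symm (σ t (β (ι K i))) ∈
        Submodule.span K (Set.range (ι K : Fin n → FreeAlgebra K (Fin n)))

/-- The submodule of the free algebra consisting of the elements all of whose homogeneous
components (in the standard grading where each generator has degree 1) have degree at least 2. -/
def FreeAlgebra.higherDegree (K : Type) [Field K] (n : ℕ) :
    Submodule K (FreeAlgebra K (Fin n)) :=
  ⨆ k : {k : ℕ // 2 ≤ k},
    Submodule.span K (Set.range (ι K : Fin n → FreeAlgebra K (Fin n))) ^ (k : ℕ)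

section TorusCharacter

variable (K : Type*) [Field K] {J : Type*} [Fintype J]

def torusCharacter (m : J → ℤ) : (J → Kˣ) →* K where
  toFun t := ((∏ j, t j ^ m j : Kˣ) : K)
  map_one' := by simp
  map_mul' s t := by simp [mul_zpow, Finset.prod_mul_distrib]

variable {K}

lemma torusCharacter_zero (t : J → Kˣ) : torusCharacter K 0 t = 1 := by
  simp [torusCharacter]

lemma torusCharacter_add (m m' : J → ℤ) (t : J → Kˣ) :
    torusCharacter K (m + m') t = torusCharacter K m t * torusCharacter K m' t := by
  simp [torusCharacter, zpow_add, Finset.prod_mul_distrib]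

lemma torusCharacter_mulSingle [DecidableEq J] (m : J → ℤ) (j : J) (u : Kˣ) :
    torusCharacter K m (Pi.mulSingle j u) = (u : K) ^ m j := by
  simp only [torusCharacter, MonoidHom.coe_mk, OneHom.coe_mk, Units.coe_prod,
    Units.val_zpow_eq_zpow_val]
  rw [Fintype.prod_eq_single j (fun l hl => by simp [hl])]
  simp

lemma torusCharacter_injective [CharZero K] :
    Function.Injective (torusCharacter K (J := J)) := by
  classical
  intro m m' h
  funext j
  have h2 := congr($h (Pi.mulSingle j (Units.mk0 (2 : K) two_ne_zero)))
  simp only [torusCharacter_mulSingle, Units.val_mk0] at h2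
  have h2' : (2 : ℚ) ^ m j = (2 : ℚ) ^ m' j := Rat.cast_injective (α := K) (by push_cast; exact h2)
  exact zpow_right_injective₀ (by norm_num) (by norm_num) h2'

lemma mem_of_forall_sum_torusCharacter_smul_mem [CharZero K] {V : Type*} [AddCommGroup V]
    [Module K V] (U : Submodule K V) (S : Finset (J → ℤ)) (v : (J → ℤ) → V)
    (h : ∀ t, ∑ m ∈ S, torusCharacter K m t • v m ∈ U) {m : J → ℤ} (hm : m ∈ S) :
    v m ∈ U := by
  rw [← Submodule.Quotient.mk_eq_zero, ← Module.forall_dual_apply_eq_zero_iff K]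
  intro f
  have hind := (linearIndependent_monoidHom (J → Kˣ) K).comp _ torusCharacter_injective
  refine linearIndependent_iff'.mp hind S (fun m => f (Submodule.Quotient.mk (v m))) ?_ m hm
  funext t
  have : f (U.mkQ (∑ m ∈ S, torusCharacter K m t • v m)) = 0 := by
    rw [Submodule.mkQ_apply, (Submodule.Quotient.mk_eq_zero U).mpr (h t), map_zero]
  simpa [Finset.sum_apply, mul_comm, map_sum] using this

lemma sub_mem_of_forall_sum_torusCharacter_smul_sub_mem [CharZero K] {V : Type*}
    [AddCommGroup V] [Module K V] (U : Submodule K V) (a : (J → ℤ) →₀ V) (x : V) (m : J → ℤ)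
    (h : ∀ t, (a.sum fun m v => torusCharacter K m t • v) - torusCharacter K m t • x ∈ U) :
    a m - x ∈ U := by
  classical
  set f := a - Finsupp.single m x
  have hf : ∀ t, ∑ m' ∈ f.support, torusCharacter K m' t • f m' ∈ U := by
    intro t
    have hsum : (f.sum fun m' v => torusCharacter K m' t • v)
        = (a.sum fun m' v => torusCharacter K m' t • v) - torusCharacter K m t • x := by
      rw [Finsupp.sum_sub_index (fun _ _ _ => smul_sub _ _ _)]
      simp
    show (f.sum fun m' v => torusCharacter K m' t • v) ∈ U
    rw [hsum]
    exact h t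
  have hfm : f m = a m - x := by simp [f]
  rw [← hfm]
  by_cases hm : m ∈ f.support
  · exact mem_of_forall_sum_torusCharacter_smul_mem U f.support f hf hm
  · rw [Finsupp.notMem_support_iff.mp hm]
    exact U.zero_mem

end TorusCharacter

section WeightSpace

variable {K A J : Type*} [Field K] [Ring A] [Algebra K A] [Fintype J]
  (σ : (J → Kˣ) →* (A ≃ₐ[K] A))

def torusWeightSpace (m : J → ℤ) : Submodule K A where
  carrier := {x | ∀ t, σ t x = torusCharacter K m t • x}
  add_mem' hx hy t := by rw [map_add, hx t, hy t, smul_add]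
  zero_mem' t := by rw [map_zero, smul_zero]
  smul_mem' c x hx t := by rw [map_smul, hx t, smul_comm]

variable {σ}

lemma one_mem_torusWeightSpace_zero : (1 : A) ∈ torusWeightSpace σ 0 := fun t => by
  rw [map_one, torusCharacter_zero, one_smul]

lemma mul_mem_torusWeightSpace {m m' : J → ℤ} {x y : A} (hx : x ∈ torusWeightSpace σ m)
    (hy : y ∈ torusWeightSpace σ m') : x * y ∈ torusWeightSpace σ (m + m') := fun t => by
  rw [map_mul, hx t, hy t, torusCharacter_add, smul_mul_smul_comm]

lemma mul_mem_iSup_torusWeightSpace {x y : A} (hx : x ∈ ⨆ m, torusWeightSpace σ m)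
    (hy : y ∈ ⨆ m, torusWeightSpace σ m) : x * y ∈ ⨆ m, torusWeightSpace σ m := by
  refine Submodule.iSup_induction _ (motive := fun x => x * y ∈ ⨆ m, torusWeightSpace σ m) hx
    (fun m x hx => ?_) (by simp) (fun x x' hx hx' => by rw [add_mul]; exact add_mem hx hx')
  refine Submodule.iSup_induction _ (motive := fun y => x * y ∈ ⨆ m, torusWeightSpace σ m) hy
    (fun m' y hy => ?_) (by simp) (fun y y' hy hy' => by rw [mul_add]; exact add_mem hy hy')
  exact Submodule.mem_iSup_of_mem _ (mul_mem_torusWeightSpace hx hy)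

variable [CharZero K]

lemma mem_torusWeightSpace_of_forall_eq_sum {x : A} {a : (J → ℤ) →₀ A}
    (ha : ∀ t, σ t x = a.sum fun m c => torusCharacter K m t • c) (m : J → ℤ) :
    a m ∈ torusWeightSpace σ m := by
  by_cases hm : m ∈ a.support
  swap
  · rw [Finsupp.notMem_support_iff.mp hm]
    exact zero_mem _
  intro s
  rw [← sub_eq_zero, ← Submodule.mem_bot K]
  refine mem_of_forall_sum_torusCharacter_smul_mem ⊥ a.support
    (fun m => σ s (a m) - torusCharacter K m s • a m) (fun t => ?_) hm
  have hs : σ s (σ t x) = ∑ m ∈ a.support, torusCharacter K m t • σ s (a m) := by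
    simp [ha, Finsupp.sum, map_sum]
  have hst : σ s (σ t x) = ∑ m ∈ a.support, torusCharacter K m t • torusCharacter K m s • a m := by
    rw [← AlgEquiv.mul_apply, ← map_mul, ha, Finsupp.sum]
    simp [smul_smul, mul_comm]
  simp [smul_sub, Finset.sum_sub_distrib, ← hs, ← hst]

lemma mem_iSup_torusWeightSpace_of_forall_eq_sum {x : A} {a : (J → ℤ) →₀ A}
    (ha : ∀ t, σ t x = a.sum fun m c => torusCharacter K m t • c) :
    x ∈ ⨆ m, torusWeightSpace σ m := by
  have hx : x = a.sum fun _ c => c := by simpa using ha 1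
  rw [hx]
  exact Submodule.sum_mem _ fun m _ =>
    Submodule.mem_iSup_of_mem m (mem_torusWeightSpace_of_forall_eq_sum ha m)

end WeightSpace

namespace FreeMonoid

variable {X J : Type*} (k : X → J → ℤ)

def weight (w : FreeMonoid X) : J → ℤ :=
  (w.toList.map k).sum

@[simp]
lemma weight_one : weight k 1 = 0 := rfl

@[simp]
lemma weight_of_mul (i : X) (w : FreeMonoid X) : weight k (of i * w) = k i + weight k w := by
  simp [weight, toList_mul, toList_of]

lemma length_le_weight {k} (hpos : ∀ i j, 1 ≤ k i j) (w : FreeMonoid X) (j : J) :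
    (w.length : ℤ) ≤ weight k w j := by
  induction w using FreeMonoid.inductionOn' with
  | one => simp
  | of_mul i w ih =>
    simp only [weight_of_mul, length_mul, length_of, Pi.add_apply]
    have := hpos i j
    omega

end FreeMonoid

namespace FreeAlgebra

section Filtration

variable (K X : Type*) [Field K]

noncomputable def degreeAtLeast (d : ℕ) : Submodule K (FreeAlgebra K X) :=
  Submodule.span K (basisFreeMonoid K X '' {w | d ≤ w.length})

variable {K X}

noncomputable def homogeneousPart (d : ℕ) (x : FreeAlgebra K X) : FreeAlgebra K X :=
  (basisFreeMonoid K X).repr.symm (((basisFreeMonoid K X).repr x).filter (·.length = d))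

lemma basisFreeMonoid_apply (w : FreeMonoid X) :
    basisFreeMonoid K X w = FreeMonoid.lift (ι K) w := by
  simp [basisFreeMonoid, equivMonoidAlgebraFreeMonoid, MonoidAlgebra.lift_single]

lemma basisFreeMonoid_one : basisFreeMonoid K X 1 = 1 := by
  rw [basisFreeMonoid_apply, map_one]

lemma basisFreeMonoid_mul (w w' : FreeMonoid X) :
    basisFreeMonoid K X (w * w') = basisFreeMonoid K X w * basisFreeMonoid K X w' := by
  simp only [basisFreeMonoid_apply, map_mul]

lemma basisFreeMonoid_of (i : X) : basisFreeMonoid K X (FreeMonoid.of i) = ι K i := by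
  rw [basisFreeMonoid_apply, FreeMonoid.lift_eval_of]

lemma mem_degreeAtLeast_iff {d : ℕ} {x : FreeAlgebra K X} :
    x ∈ degreeAtLeast K X d ↔
      ∀ w : FreeMonoid X, w.length < d → (basisFreeMonoid K X).repr x w = 0 := by
  rw [degreeAtLeast, Module.Basis.mem_span_image]
  refine ⟨fun h w hw => ?_, fun h w hw => ?_⟩
  · by_contra hx
    exact absurd (h (Finsupp.mem_support_iff.mpr hx)) (by simpa using hw)
  · by_contra hw'
    exact Finsupp.mem_support_iff.mp hw (h w (by simpa using hw'))

lemma degreeAtLeast_antitone : Antitone (degreeAtLeast K X) := fun _ _ h =>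
  Submodule.span_mono (Set.image_mono fun _ hw => le_trans h hw)

lemma degreeAtLeast_zero : degreeAtLeast K X 0 = ⊤ := by
  simp [degreeAtLeast, Module.Basis.span_eq]

lemma basisFreeMonoid_mem_degreeAtLeast {d : ℕ} {w : FreeMonoid X} (h : d ≤ w.length) :
    basisFreeMonoid K X w ∈ degreeAtLeast K X d :=
  Submodule.subset_span ⟨w, h, rfl⟩

lemma ι_mem_degreeAtLeast_one (i : X) : ι K i ∈ degreeAtLeast K X 1 := by
  rw [← basisFreeMonoid_of]
  exact basisFreeMonoid_mem_degreeAtLeast (by simp)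

lemma mul_mem_degreeAtLeast {a b : ℕ} {x y : FreeAlgebra K X}
    (hx : x ∈ degreeAtLeast K X a) (hy : y ∈ degreeAtLeast K X b) :
    x * y ∈ degreeAtLeast K X (a + b) := by
  refine (show degreeAtLeast K X a * degreeAtLeast K X b ≤ degreeAtLeast K X (a + b) from ?_)
    (Submodule.mul_mem_mul hx hy)
  rw [degreeAtLeast, degreeAtLeast, Submodule.span_mul_span, Submodule.span_le]
  rintro _ ⟨_, ⟨w, hw, rfl⟩, _, ⟨w', hw', rfl⟩, rfl⟩
  show basisFreeMonoid K X w * basisFreeMonoid K X w' ∈ _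
  rw [← basisFreeMonoid_mul]
  exact basisFreeMonoid_mem_degreeAtLeast (by rw [FreeMonoid.length_mul]; exact add_le_add hw hw')

lemma span_range_ι_pow_le_degreeAtLeast (d : ℕ) :
    Submodule.span K (Set.range (ι K : X → FreeAlgebra K X)) ^ d ≤ degreeAtLeast K X d := by
  induction d with
  | zero => simp [degreeAtLeast_zero]
  | succ d ih =>
    rw [pow_succ, Submodule.mul_le]
    intro x hx y hy
    refine mul_mem_degreeAtLeast (ih hx) ((Submodule.span_le.mpr ?_) hy)
    rintro _ ⟨i, rfl⟩
    exact ι_mem_degreeAtLeast_one i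

lemma exists_repr_ne_zero_of_ne_zero {x : FreeAlgebra K X} (hx : x ≠ 0) :
    ∃ w, (basisFreeMonoid K X).repr x w ≠ 0 ∧ x ∈ degreeAtLeast K X w.length := by
  have hsupp : ((basisFreeMonoid K X).repr x).support.Nonempty := by simpa using hx
  obtain ⟨w, hw, hmin⟩ := Finset.exists_min_image _ FreeMonoid.length hsupp
  refine ⟨w, Finsupp.mem_support_iff.mp hw, mem_degreeAtLeast_iff.mpr fun w' hw' => ?_⟩
  by_contra h
  exact absurd (hmin w' (Finsupp.mem_support_iff.mpr h)) (by omega)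

lemma repr_homogeneousPart (d : ℕ) (x : FreeAlgebra K X) :
    (basisFreeMonoid K X).repr (homogeneousPart d x) =
      ((basisFreeMonoid K X).repr x).filter (·.length = d) := by
  simp [homogeneousPart]

lemma homogeneousPart_mem_degreeAtLeast (d : ℕ) (x : FreeAlgebra K X) :
    homogeneousPart d x ∈ degreeAtLeast K X d := by
  rw [mem_degreeAtLeast_iff]
  intro w hw
  rw [repr_homogeneousPart, Finsupp.filter_apply, if_neg (by omega)]

lemma sub_homogeneousPart_mem_degreeAtLeast_succ {d : ℕ} {x : FreeAlgebra K X}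
    (hx : x ∈ degreeAtLeast K X d) : x - homogeneousPart d x ∈ degreeAtLeast K X (d + 1) := by
  rw [mem_degreeAtLeast_iff] at hx ⊢
  intro w hw
  rw [map_sub, Finsupp.sub_apply, repr_homogeneousPart]
  rcases (Nat.lt_succ_iff.mp hw).lt_or_eq with hw | hw
  · rw [hx w hw, Finsupp.filter_apply, if_neg (by omega), sub_zero]
  · rw [Finsupp.filter_apply, if_pos hw, sub_self]

end Filtration

section Endomorphisms

variable {K X : Type*} [Field K]

lemma map_mem_degreeAtLeast {ψ : FreeAlgebra K X →ₐ[K] FreeAlgebra K X}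
    (hψ : ∀ i, ψ (ι K i) ∈ degreeAtLeast K X 1) {d : ℕ} {x : FreeAlgebra K X}
    (hx : x ∈ degreeAtLeast K X d) : ψ x ∈ degreeAtLeast K X d := by
  have hbasis (w : FreeMonoid X) : ψ (basisFreeMonoid K X w) ∈ degreeAtLeast K X w.length := by
    induction w using FreeMonoid.inductionOn' with
    | one => simp [basisFreeMonoid_one, degreeAtLeast_zero]
    | of_mul i w ih =>
      rw [basisFreeMonoid_mul, basisFreeMonoid_of, map_mul, FreeMonoid.length_mul,
        FreeMonoid.length_of]
      exact mul_mem_degreeAtLeast (hψ i) ih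
  refine (show degreeAtLeast K X d ≤ (degreeAtLeast K X d).comap ψ.toLinearMap from
    Submodule.span_le.mpr ?_) hx
  rintro _ ⟨w, hw, rfl⟩
  exact degreeAtLeast_antitone hw (hbasis w)

lemma map_sub_map_mem_degreeAtLeast_succ {ψ₁ ψ₂ : FreeAlgebra K X →ₐ[K] FreeAlgebra K X}
    (h₂ : ∀ i, ψ₂ (ι K i) ∈ degreeAtLeast K X 1)
    (h : ∀ i, ψ₁ (ι K i) - ψ₂ (ι K i) ∈ degreeAtLeast K X 2) {d : ℕ} {x : FreeAlgebra K X}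
    (hx : x ∈ degreeAtLeast K X d) : ψ₁ x - ψ₂ x ∈ degreeAtLeast K X (d + 1) := by
  have h₁ (i : X) : ψ₁ (ι K i) ∈ degreeAtLeast K X 1 := by
    simpa using add_mem (degreeAtLeast_antitone (by norm_num) (h i)) (h₂ i)
  have hbasis (w : FreeMonoid X) : ψ₁ (basisFreeMonoid K X w) - ψ₂ (basisFreeMonoid K X w) ∈
      degreeAtLeast K X (w.length + 1) := by
    induction w using FreeMonoid.inductionOn' with
    | one => simp [basisFreeMonoid_one]
    | of_mul i w ih =>
      rw [basisFreeMonoid_mul, basisFreeMonoid_of, map_mul, map_mul, FreeMonoid.length_mul,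
        FreeMonoid.length_of]
      have hw := map_mem_degreeAtLeast h₁ (basisFreeMonoid_mem_degreeAtLeast (w := w) le_rfl)
      have key : ψ₁ (ι K i) * ψ₁ (basisFreeMonoid K X w) - ψ₂ (ι K i) * ψ₂ (basisFreeMonoid K X w)
          = (ψ₁ (ι K i) - ψ₂ (ι K i)) * ψ₁ (basisFreeMonoid K X w)
            + ψ₂ (ι K i) * (ψ₁ (basisFreeMonoid K X w) - ψ₂ (basisFreeMonoid K X w)) := by
        noncomm_ring
      rw [key]
      refine add_mem ?_ ?_
      · exact degreeAtLeast_antitone (by omega) (mul_mem_degreeAtLeast (h i) hw)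
      · exact degreeAtLeast_antitone (by omega) (mul_mem_degreeAtLeast (h₂ i) ih)
  refine (show degreeAtLeast K X d ≤
      (degreeAtLeast K X (d + 1)).comap (ψ₁.toLinearMap - ψ₂.toLinearMap) from
    Submodule.span_le.mpr ?_) hx
  rintro _ ⟨w, hw, rfl⟩
  exact degreeAtLeast_antitone (Nat.succ_le_succ hw) (hbasis w)

lemma lift_injective {A : X → FreeAlgebra K X}
    (hA : ∀ i, A i - ι K i ∈ degreeAtLeast K X 2) : Function.Injective (lift K A) := by
  rw [injective_iff_map_eq_zero]
  intro x hx
  by_contra hx0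
  obtain ⟨w, hw, hxw⟩ := exists_repr_ne_zero_of_ne_zero hx0
  have := map_sub_map_mem_degreeAtLeast_succ (ψ₁ := lift K A) (ψ₂ := AlgHom.id K _)
    ι_mem_degreeAtLeast_one (by simpa using hA) hxw
  rw [hx, AlgHom.id_apply, zero_sub, neg_mem_iff, mem_degreeAtLeast_iff] at this
  exact hw (this w (Nat.lt_succ_self _))

end Endomorphisms

section TorusAction

variable {K X J : Type*} [Field K] [Fintype J]

noncomputable def diagonalMap (k : X → J → ℤ) (t : J → Kˣ) :
    FreeAlgebra K X →ₐ[K] FreeAlgebra K X :=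
  lift K fun i => torusCharacter K (k i) t • ι K i

lemma diagonalMap_basisFreeMonoid (k : X → J → ℤ) (t : J → Kˣ) (w : FreeMonoid X) :
    diagonalMap k t (basisFreeMonoid K X w) =
      torusCharacter K (w.weight k) t • basisFreeMonoid K X w := by
  induction w using FreeMonoid.inductionOn' with
  | one => simp [basisFreeMonoid_one, torusCharacter_zero]
  | of_mul i w ih =>
    rw [basisFreeMonoid_mul, basisFreeMonoid_of, map_mul, ih, diagonalMap, lift_ι_apply,
      FreeMonoid.weight_of_mul, torusCharacter_add, smul_mul_smul_comm]

lemma repr_diagonalMap (k : X → J → ℤ) (t : J → Kˣ) (x : FreeAlgebra K X) (w : FreeMonoid X) :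
    (basisFreeMonoid K X).repr (diagonalMap k t x) w =
      torusCharacter K (w.weight k) t * (basisFreeMonoid K X).repr x w := by
  have := (basisFreeMonoid K X).ext
    (f₁ := Finsupp.lapply w ∘ₗ (basisFreeMonoid K X).repr.toLinearMap ∘ₗ
      (diagonalMap k t).toLinearMap)
    (f₂ := torusCharacter K (w.weight k) t • (Finsupp.lapply w ∘ₗ
      (basisFreeMonoid K X).repr.toLinearMap)) fun v => by
    by_cases hv : v = w
    · subst hv; simp [diagonalMap_basisFreeMonoid]
    · simp [diagonalMap_basisFreeMonoid, hv]
  exact LinearMap.congr_fun this x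

def HasDiagonalLinearPart (σ : (J → Kˣ) →* (FreeAlgebra K X ≃ₐ[K] FreeAlgebra K X))
    (k : X → J → ℤ) : Prop :=
  ∀ t i, σ t (ι K i) - diagonalMap k t (ι K i) ∈ degreeAtLeast K X 2

variable {σ : (J → Kˣ) →* (FreeAlgebra K X ≃ₐ[K] FreeAlgebra K X)} {k : X → J → ℤ}
  {A : X → FreeAlgebra K X}

lemma lift_basisFreeMonoid_mem_torusWeightSpace (hA : ∀ i, A i ∈ torusWeightSpace σ (k i))
    (w : FreeMonoid X) : lift K A (basisFreeMonoid K X w) ∈ torusWeightSpace σ (w.weight k) := by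
  induction w using FreeMonoid.inductionOn' with
  | one => simpa [basisFreeMonoid_one] using one_mem_torusWeightSpace_zero
  | of_mul i w ih =>
    rw [basisFreeMonoid_mul, basisFreeMonoid_of, map_mul, lift_ι_apply, FreeMonoid.weight_of_mul]
    exact mul_mem_torusWeightSpace (hA i) ih

lemma iSup_torusWeightSpace_eq_top (hgen : ∀ i, ι K i ∈ ⨆ m, torusWeightSpace σ m) :
    ⨆ m, torusWeightSpace σ m = ⊤ := by
  refine Submodule.eq_top_iff'.mpr fun x => ?_
  induction x using FreeAlgebra.induction with
  | grade0 r =>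
    refine Submodule.mem_iSup_of_mem 0 ?_
    simpa [Algebra.algebraMap_eq_smul_one] using
      Submodule.smul_mem _ r (one_mem_torusWeightSpace_zero (σ := σ))
  | grade1 i => exact hgen i
  | mul a b ha hb => exact mul_mem_iSup_torusWeightSpace ha hb
  | add a b ha hb => exact add_mem ha hb

variable [CharZero K]

/-- Since `y` has order `w.length`, the coefficient of `w` in `σ t y = torusCharacter K m t • y`
is that in `diagonalMap k t y`, namely `torusCharacter K (w.weight k) t` times that in `y`. -/
lemma weight_eq_of_repr_ne_zero (hσ : HasDiagonalLinearPart σ k) {m : J → ℤ}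
    {y : FreeAlgebra K X} (hy : y ∈ torusWeightSpace σ m) {w : FreeMonoid X}
    (hyw : y ∈ degreeAtLeast K X w.length) (hw : (basisFreeMonoid K X).repr y w ≠ 0) :
    w.weight k = m := by
  apply torusCharacter_injective (K := K)
  ext t
  have hdiag (i : X) : diagonalMap k t (ι K i) ∈ degreeAtLeast K X 1 := by
    simpa [diagonalMap] using Submodule.smul_mem _ _ (ι_mem_degreeAtLeast_one i)
  have h := map_sub_map_mem_degreeAtLeast_succ (ψ₁ := (σ t).toAlgHom) hdiag (hσ t) hyw
  have hcoeff := mem_degreeAtLeast_iff.mp h w (Nat.lt_succ_self _)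
  rw [map_sub, Finsupp.sub_apply, repr_diagonalMap, AlgEquiv.toAlgHom_apply, hy t, map_smul,
    Finsupp.smul_apply, smul_eq_mul, sub_eq_zero] at hcoeff
  exact (mul_right_cancel₀ hw hcoeff).symm

lemma eq_zero_of_mem_torusWeightSpace_of_mem_degreeAtLeast (hσ : HasDiagonalLinearPart σ k)
    (hpos : ∀ i j, 1 ≤ k i j) {m : J → ℤ} {y : FreeAlgebra K X} (hy : y ∈ torusWeightSpace σ m)
    {j : J} {d : ℕ} (hd : m j < d) (hyd : y ∈ degreeAtLeast K X d) : y = 0 := by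
  by_contra hy0
  obtain ⟨w, hw, hyw⟩ := exists_repr_ne_zero_of_ne_zero hy0
  have hwd : d ≤ w.length := by
    by_contra hlt
    exact hw (mem_degreeAtLeast_iff.mp hyd w (by omega))
  have := FreeMonoid.length_le_weight hpos w j
  rw [weight_eq_of_repr_ne_zero hσ hy hyw hw] at this
  omega

lemma lift_homogeneousPart_mem_torusWeightSpace (hσ : HasDiagonalLinearPart σ k)
    (hA : ∀ i, A i ∈ torusWeightSpace σ (k i)) {m : J → ℤ} {y : FreeAlgebra K X}
    (hy : y ∈ torusWeightSpace σ m) {d : ℕ} (hyd : y ∈ degreeAtLeast K X d) :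
    lift K A (homogeneousPart d y) ∈ torusWeightSpace σ m := by
  have hspan : homogeneousPart d y ∈
      Submodule.span K (basisFreeMonoid K X '' {w | w.weight k = m}) := by
    rw [Module.Basis.mem_span_image, repr_homogeneousPart, Finsupp.support_filter]
    intro w hw
    rw [Finset.mem_coe, Finset.mem_filter] at hw
    obtain ⟨hw, rfl⟩ := hw
    exact weight_eq_of_repr_ne_zero hσ hy hyd (Finsupp.mem_support_iff.mp hw)
  refine (show _ ≤ (torusWeightSpace σ m).comap (lift K A).toLinearMap from
    Submodule.span_le.mpr ?_) hspan
  rintro _ ⟨w, rfl, rfl⟩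
  exact lift_basisFreeMonoid_mem_torusWeightSpace hA w

lemma torusWeightSpace_le_range_lift [Nonempty J] (hσ : HasDiagonalLinearPart σ k)
    (hpos : ∀ i j, 1 ≤ k i j) (hA : ∀ i, A i ∈ torusWeightSpace σ (k i))
    (hA₂ : ∀ i, A i - ι K i ∈ degreeAtLeast K X 2) (m : J → ℤ) :
    torusWeightSpace σ m ≤ LinearMap.range (lift K A).toLinearMap := by
  obtain ⟨j⟩ := ‹Nonempty J›
  -- weight vectors of order `≥ N` vanish, so we induct downwards on the order
  set N := (m j).toNat + 1
  suffices h : ∀ e, ∀ y ∈ torusWeightSpace σ m, y ∈ degreeAtLeast K X (N - e) →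
      y ∈ LinearMap.range (lift K A).toLinearMap from
    fun y hy => h N y hy (by simp [degreeAtLeast_zero])
  intro e
  induction e with
  | zero =>
    intro y hy hyN
    rw [eq_zero_of_mem_torusWeightSpace_of_mem_degreeAtLeast hσ hpos hy (j := j) (by omega) hyN]
    exact zero_mem _
  | succ e ih =>
    intro y hy hyd
    set d := N - (e + 1) with hd
    set p := lift K A (homogeneousPart d y)
    have hp := lift_homogeneousPart_mem_torusWeightSpace hσ hA hy hyd
    have hyp : y - p ∈ degreeAtLeast K X (d + 1) := by
      have h₁ := sub_homogeneousPart_mem_degreeAtLeast_succ hyd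
      have h₂ := map_sub_map_mem_degreeAtLeast_succ (ψ₁ := lift K A) (ψ₂ := AlgHom.id K _)
        ι_mem_degreeAtLeast_one (by simpa using hA₂) (homogeneousPart_mem_degreeAtLeast d y)
      simpa [p] using sub_mem h₁ h₂
    have hp' : p ∈ LinearMap.range (lift K A).toLinearMap := ⟨homogeneousPart d y, rfl⟩
    have := ih (y - p) (sub_mem hy hp) (degreeAtLeast_antitone (by omega) hyp)
    simpa only [sub_add_cancel] using add_mem this hp'

lemma lift_surjective [Nonempty J] (hσ : HasDiagonalLinearPart σ k)
    (hpos : ∀ i j, 1 ≤ k i j) (hA : ∀ i, A i ∈ torusWeightSpace σ (k i))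
    (hA₂ : ∀ i, A i - ι K i ∈ degreeAtLeast K X 2)
    (hgen : ∀ i, ι K i ∈ ⨆ m, torusWeightSpace σ m) : Function.Surjective (lift K A) := by
  intro x
  have hx : x ∈ ⨆ m, torusWeightSpace σ m := by
    rw [iSup_torusWeightSpace_eq_top hgen]; trivial
  exact LinearMap.mem_range.mp (iSup_le (torusWeightSpace_le_range_lift hσ hpos hA hA₂) hx)

end TorusAction

end FreeAlgebra

lemma FreeAlgebra.higherDegree_le_degreeAtLeast_two (K : Type) [Field K] (n : ℕ) :
    higherDegree K n ≤ degreeAtLeast K (Fin n) 2 :=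
  iSup_le fun d => (span_range_ι_pow_le_degreeAtLeast d).trans (degreeAtLeast_antitone d.2)

lemma torusActionIsLinearizable_of_bijective_lift {K : Type} [Field K] {n r : ℕ}
    {σ : (Fin r → Kˣ) →* (FreeAlgebra K (Fin n) ≃ₐ[K] FreeAlgebra K (Fin n))}
    {k : Fin n → Fin r → ℤ} {A : Fin n → FreeAlgebra K (Fin n)}
    (hbij : Function.Bijective (lift K A)) (hA : ∀ i, A i ∈ torusWeightSpace σ (k i)) :
    TorusActionIsLinearizable σ := by
  set β := AlgEquiv.ofBijective (lift K A) hbij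
  have hβ (i : Fin n) : β (ι K i) = A i := lift_ι_apply A i
  refine ⟨β, fun t i => ?_⟩
  rw [hβ, hA i t, map_smul, ← hβ, AlgEquiv.symm_apply_apply]
  exact Submodule.smul_mem _ _ (Submodule.subset_span ⟨i, rfl⟩)

theorem positive_root_torus_action_linearizable_general
    {K : Type} [Field K] [CharZero K] {n r : ℕ}
    (hr : 1 ≤ r)
    (σ : (Fin r → Kˣ) →* (FreeAlgebra K (Fin n) ≃ₐ[K] FreeAlgebra K (Fin n)))
    (hreg : TorusActionIsRegular σ)
    (k : Fin n → Fin r → ℤ)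
    (hpos : ∀ (i : Fin n) (j : Fin r), 1 ≤ k i j)
    (hroots : ∀ (t : Fin r → Kˣ) (i : Fin n),
      σ t (ι K i) - ((∏ j : Fin r, (t j) ^ (k i j) : Kˣ) : K) • ι K i
        ∈ FreeAlgebra.higherDegree K n) :
    TorusActionIsLinearizable σ := by
  have : Nonempty (Fin r) := Fin.pos_iff_nonempty.mp hr
  have hσ (t i) := higherDegree_le_degreeAtLeast_two K n (hroots t i)
  have hdiag : HasDiagonalLinearPart σ k := fun t i => by
    rw [diagonalMap, lift_ι_apply]
    exact hσ t i
  choose a ha using hreg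
  have hA (i : Fin n) : a i (k i) ∈ torusWeightSpace σ (k i) :=
    mem_torusWeightSpace_of_forall_eq_sum (ha i) (k i)
  have hA₂ (i : Fin n) : a i (k i) - ι K i ∈ degreeAtLeast K (Fin n) 2 :=
    sub_mem_of_forall_sum_torusCharacter_smul_sub_mem _ (a i) (ι K i) (k i) fun t =>
      ha i t ▸ hσ t i
  have hgen (i : Fin n) : ι K i ∈ ⨆ m, torusWeightSpace σ m :=
    mem_iSup_torusWeightSpace_of_forall_eq_sum (ha i)
  exact torusActionIsLinearizable_of_bijective_lift
    ⟨lift_injective hA₂, lift_surjective hdiag hpos hA hA₂ hgen⟩ hA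

/-- Every regular torus action with positive roots on the free associative algebra over an
algebraically closed field of characteristic zero is linearizable. -/
theorem positive_root_torus_action_linearizable
    {K : Type} [Field K] [IsAlgClosed K] [CharZero K] {n r : ℕ}
    (hn : 1 ≤ n) (hr : 1 ≤ r)
    (σ : (Fin r → Kˣ) →* (FreeAlgebra K (Fin n) ≃ₐ[K] FreeAlgebra K (Fin n)))
    (hreg : TorusActionIsRegular σ)
    (k : Fin n → Fin r → ℤ)
    (hpos : ∀ (i : Fin n) (j : Fin r), 1 ≤ k i j)
    (hroots : ∀ (t : Fin r → Kˣ) (i : Fin n),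
      σ t (ι K i) - ((∏ j : Fin r, (t j) ^ (k i j) : Kˣ) : K) • ι K i
        ∈ FreeAlgebra.higherDegree K n) :
    TorusActionIsLinearizable σ :=
  positive_root_torus_action_linearizable_general hr σ hreg k hpos hroots
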